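/- arXiv:2107.08553 — 3 statements merged into one kernel-verified Lean document; each statement's English description precedes it below -/
import Mathlib

section
/- Suppose operators B₁(τ),…,Bₙ(τ) on a normed space satisfy ‖Bⱼ(τ)‖ ≤ C uniformly, ‖[Bⱼ(τ), Bₖ(τ)]‖ ≤ c(τ) and ‖[Ḃⱼ(τ), Bₖ(τ)]‖ ≤ c(τ) for j ≠ k with ∫_{−∞}^0 c(τ) dτ < ∞, and Ḃⱼ(τ)Φ = 0 for a fixed vector Φ. Then ‖d/dτ (B₁(τ)⋯Bₙ(τ)Φ)‖ is integrable on (−∞, 0], hence B₁(τ)⋯Bₙ(τ)Φ converges as τ → −∞. -/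
open Filter MeasureTheory

section Aux

variable {𝔸 : Type*} [NormedRing 𝔸]

lemma list_prod_norm_le_aux (M : ℝ) (h1 : (1:ℝ) ≤ M) (hone : ‖(1:𝔸)‖ ≤ 1) :
    ∀ L : List 𝔸, (∀ b ∈ L, ‖b‖ ≤ M) → ‖L.prod‖ ≤ M ^ L.length := by
  intro L
  induction L with
  | nil => intro _; simpa using hone
  | cons b L ih =>
    intro h
    have hb : ‖b‖ ≤ M := h b List.mem_cons_self
    have hL : ‖L.prod‖ ≤ M ^ L.length := ih fun x hx => h x (List.mem_cons_of_mem _ hx)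
    calc ‖(b :: L).prod‖ = ‖b * L.prod‖ := by rw [List.prod_cons]
      _ ≤ ‖b‖ * ‖L.prod‖ := norm_mul_le _ _
      _ ≤ M * M ^ L.length := by
          apply mul_le_mul hb hL (norm_nonneg _) (le_trans zero_le_one h1)
      _ = M ^ (b :: L).length := by rw [List.length_cons, pow_succ]; ring

lemma comm_list_bound_aux (A : 𝔸) (M cc : ℝ) (h1 : (1:ℝ) ≤ M) (hcc : 0 ≤ cc)
    (hone : ‖(1:𝔸)‖ ≤ 1) :
    ∀ L : List 𝔸, (∀ b ∈ L, ‖b‖ ≤ M) → (∀ b ∈ L, ‖A * b - b * A‖ ≤ cc) →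
    ‖A * L.prod - L.prod * A‖ ≤ L.length * cc * M ^ L.length := by
  intro L
  induction L with
  | nil => intro _ _; simp
  | cons b L ih =>
    intro hM hcomm
    have hb : ‖b‖ ≤ M := hM b List.mem_cons_self
    have hLp : ‖L.prod‖ ≤ M ^ L.length :=
      list_prod_norm_le_aux M h1 hone L fun x hx => hM x (List.mem_cons_of_mem _ hx)
    have hcb : ‖A * b - b * A‖ ≤ cc := hcomm b List.mem_cons_self
    have hIH : ‖A * L.prod - L.prod * A‖ ≤ L.length * cc * M ^ L.length :=
      ih (fun x hx => hM x (List.mem_cons_of_mem _ hx))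
        (fun x hx => hcomm x (List.mem_cons_of_mem _ hx))
    have key : A * (b :: L).prod - (b :: L).prod * A
        = (A * b - b * A) * L.prod + b * (A * L.prod - L.prod * A) := by
      rw [List.prod_cons]; noncomm_ring
    rw [key]
    have hM0 : (0:ℝ) ≤ M := le_trans zero_le_one h1
    have hMn : (0:ℝ) ≤ M ^ L.length := pow_nonneg hM0 _
    calc ‖(A * b - b * A) * L.prod + b * (A * L.prod - L.prod * A)‖
        ≤ ‖(A * b - b * A) * L.prod‖ + ‖b * (A * L.prod - L.prod * A)‖ := norm_add_le _ _
      _ ≤ ‖A * b - b * A‖ * ‖L.prod‖ + ‖b‖ * ‖A * L.prod - L.prod * A‖ :=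
          add_le_add (norm_mul_le _ _) (norm_mul_le _ _)
      _ ≤ cc * M ^ L.length + M * (L.length * cc * M ^ L.length) :=
          add_le_add (mul_le_mul hcb hLp (norm_nonneg _) hcc)
            (mul_le_mul hb hIH (norm_nonneg _) hM0)
      _ ≤ (b :: L).length * cc * M ^ (b :: L).length := by
          rw [List.length_cons, pow_succ]
          push_cast
          nlinarith [mul_nonneg hcc hMn, Nat.cast_nonneg (α := ℝ) L.length,
            mul_nonneg (mul_nonneg hcc hMn) (sub_nonneg.mpr h1),
            mul_nonneg (mul_nonneg (mul_nonneg (Nat.cast_nonneg (α := ℝ) L.length) hcc) hMn)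
              (sub_nonneg.mpr h1)]

end Aux

section Key

variable {H : Type*} [NormedAddCommGroup H] [InnerProductSpace ℂ H]

lemma key_lemma (Φ : H) (c : ℝ → ℝ) (M : ℝ) (hM : (1:ℝ) ≤ M) :
    ∀ (n : ℕ) (B B' : Fin n → ℝ → (H →L[ℂ] H)),
    (∀ j τ, HasDerivAt (B j) (B' j τ) τ) →
    (∀ j, Continuous (B' j)) →
    (∀ j τ, ‖B j τ‖ ≤ M) →
    (∀ j k, j ≠ k → ∀ τ : ℝ, ‖B' j τ * B k τ - B k τ * B' j τ‖ ≤ c τ) →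
    (∀ j τ, B' j τ Φ = 0) →
    ∃ g : ℝ → (H →L[ℂ] H),
      Continuous g ∧
      (∀ τ, HasDerivAt (fun t => (List.ofFn fun j => B j t).prod) (g τ) τ) ∧
      (∀ τ, ‖g τ Φ‖ ≤ (n^2 * M^(2*n) * ‖Φ‖) * |c τ|) := by
  intro n
  induction n with
  | zero =>
    intro B B' _ _ _ _ _
    refine ⟨fun _ => 0, continuous_const, fun τ => ?_, fun τ => by simp⟩
    simpa using hasDerivAt_const τ (1 : H →L[ℂ] H)
  | succ n ih =>
    intro B B' hderiv hderiv_cont hC hcomm' hΦ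
    obtain ⟨g, hg_cont, hg_deriv, hg_bound⟩ :=
      ih (fun j => B j.succ) (fun j => B' j.succ)
        (fun j τ => hderiv j.succ τ) (fun j => hderiv_cont j.succ)
        (fun j τ => hC j.succ τ)
        (fun j k hjk τ => hcomm' j.succ k.succ (fun h => hjk (Fin.succ_injective _ h)) τ)
        (fun j τ => hΦ j.succ τ)
    set F : ℝ → (H →L[ℂ] H) := fun t => (List.ofFn fun j : Fin n => B j.succ t).prod with hF
    have hF_deriv : ∀ τ, HasDerivAt F (g τ) τ := hg_deriv
    have hF_cont : Continuous F := by
      rw [continuous_iff_continuousAt]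
      exact fun τ => (hF_deriv τ).continuousAt
    have hB_cont : ∀ j : Fin (n+1), Continuous (B j) := by
      intro j
      rw [continuous_iff_continuousAt]
      exact fun τ => (hderiv j τ).continuousAt
    refine ⟨fun τ => B' 0 τ * F τ + B 0 τ * g τ, ?_, ?_, ?_⟩
    · exact (((hderiv_cont 0).mul hF_cont).add ((hB_cont 0).mul hg_cont))
    · intro τ
      have h0 : HasDerivAt (fun t => B 0 t * F t) (B' 0 τ * F τ + B 0 τ * g τ) τ :=
        (hderiv 0 τ).mul (hF_deriv τ)
      convert h0 using 2 with t
      rw [List.ofFn_succ, List.prod_cons]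
    · intro τ
      have hM0 : (0:ℝ) ≤ M := le_trans zero_le_one hM
      have hone : ‖(1 : H →L[ℂ] H)‖ ≤ 1 := ContinuousLinearMap.norm_id_le
      -- commutator bound for B' 0 against F τ
      have hcommF : ‖B' 0 τ * F τ - F τ * B' 0 τ‖ ≤ n * |c τ| * M ^ n := by
        have := comm_list_bound_aux (B' 0 τ) M (|c τ|) hM (abs_nonneg _) hone
          (List.ofFn fun j : Fin n => B j.succ τ)
          (by
            intro b hb
            obtain ⟨k, hk⟩ := List.mem_ofFn.mp hb
            rw [← hk]; exact hC k.succ τ)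
          (by
            intro b hb
            obtain ⟨k, hk⟩ := List.mem_ofFn.mp hb
            rw [← hk]
            exact le_trans (hcomm' 0 k.succ (Fin.succ_ne_zero k).symm τ) (le_abs_self _))
        simpa [List.length_ofFn] using this
      have hterm1 : ‖(B' 0 τ) (F τ Φ)‖ ≤ n * |c τ| * M ^ n * ‖Φ‖ := by
        have heq : (B' 0 τ) (F τ Φ) = (B' 0 τ * F τ - F τ * B' 0 τ) Φ := by
          simp [ContinuousLinearMap.sub_apply, ContinuousLinearMap.mul_apply, hΦ 0 τ]
        rw [heq]
        calc ‖(B' 0 τ * F τ - F τ * B' 0 τ) Φ‖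
            ≤ ‖B' 0 τ * F τ - F τ * B' 0 τ‖ * ‖Φ‖ := ContinuousLinearMap.le_opNorm _ _
          _ ≤ n * |c τ| * M ^ n * ‖Φ‖ := by gcongr
      have hterm2 : ‖(B 0 τ) ((g τ) Φ)‖ ≤ M * ((n^2 * M^(2*n) * ‖Φ‖) * |c τ|) := by
        calc ‖(B 0 τ) ((g τ) Φ)‖ ≤ ‖B 0 τ‖ * ‖(g τ) Φ‖ := ContinuousLinearMap.le_opNorm _ _
          _ ≤ M * ((n^2 * M^(2*n) * ‖Φ‖) * |c τ|) := by
              apply mul_le_mul (hC 0 τ) (hg_bound τ) (norm_nonneg _) hM0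
      have happ : ((B' 0 τ * F τ + B 0 τ * g τ) : H →L[ℂ] H) Φ
          = (B' 0 τ) (F τ Φ) + (B 0 τ) ((g τ) Φ) := by
        simp [ContinuousLinearMap.add_apply, ContinuousLinearMap.mul_apply]
      rw [happ]
      have hpow1 : M ^ n ≤ M ^ (2*(n+1)) := pow_le_pow_right₀ hM (by omega)
      have hpow2 : M ^ (2*n+1) ≤ M ^ (2*(n+1)) := pow_le_pow_right₀ hM (by omega)
      have habs : (0:ℝ) ≤ |c τ| := abs_nonneg _
      have hΦ0 : (0:ℝ) ≤ ‖Φ‖ := norm_nonneg _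
      calc ‖(B' 0 τ) (F τ Φ) + (B 0 τ) ((g τ) Φ)‖
          ≤ ‖(B' 0 τ) (F τ Φ)‖ + ‖(B 0 τ) ((g τ) Φ)‖ := norm_add_le _ _
        _ ≤ n * |c τ| * M ^ n * ‖Φ‖ + M * ((n^2 * M^(2*n) * ‖Φ‖) * |c τ|) :=
            add_le_add hterm1 hterm2
        _ ≤ (((n:ℝ)+1)^2 * M^(2*(n+1)) * ‖Φ‖) * |c τ| := by
            have hpa : (0:ℝ) ≤ ‖Φ‖ * |c τ| := mul_nonneg hΦ0 habs
            have t1 := mul_le_mul_of_nonneg_left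
              (mul_le_mul_of_nonneg_right hpow1 hpa) (Nat.cast_nonneg (α := ℝ) n)
            have t2 := mul_le_mul_of_nonneg_left
              (mul_le_mul_of_nonneg_right hpow2 hpa) (sq_nonneg ((n:ℝ)))
            have hX : (0:ℝ) ≤ M^(2*(n+1)) * (‖Φ‖ * |c τ|) :=
              mul_nonneg (pow_nonneg hM0 _) hpa
            calc ↑n * |c τ| * M ^ n * ‖Φ‖ + M * (↑n ^ 2 * M ^ (2 * n) * ‖Φ‖ * |c τ|)
                ≤ (n:ℝ) * (M^(2*(n+1)) * (‖Φ‖ * |c τ|))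
                  + (n:ℝ)^2 * (M^(2*(n+1)) * (‖Φ‖ * |c τ|)) :=
                add_le_add (le_trans (le_of_eq (by ring)) t1)
                  (le_trans (le_of_eq (by ring)) t2)
              _ ≤ (((n:ℝ)+1)^2 * M^(2*(n+1)) * ‖Φ‖) * |c τ| := by
                  nlinarith [hX, Nat.cast_nonneg (α := ℝ) n]
        _ = (((n:ℕ)+1:ℕ)^2 * M^(2*((n:ℕ)+1)) * ‖Φ‖) * |c τ| := by push_cast; ring

end Key

/-- Cook-method estimate behind Lemma 2 of the paper.  Suppose the operators
`B₁(τ),…,Bₙ(τ)` are uniformly bounded, the commutators `[Bⱼ(τ), Bₖ(τ)]` and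
`[Ḃⱼ(τ), Bₖ(τ)]` (`j ≠ k`) are bounded in norm by an integrable function
`c(τ)` on `(−∞,0]`, and `Ḃⱼ(τ)Φ = 0` for a fixed vector `Φ`.  Then the norm of
the derivative of `τ ↦ B₁(τ)⋯Bₙ(τ)Φ` is integrable on `(−∞,0]`, and hence
`B₁(τ)⋯Bₙ(τ)Φ` converges as `τ → −∞`. -/
theorem product_of_operators_converges
    (H : Type*) [NormedAddCommGroup H] [InnerProductSpace ℂ H] [CompleteSpace H]
    (n : ℕ) (B B' : Fin n → ℝ → (H →L[ℂ] H))
    (hderiv : ∀ j τ, HasDerivAt (B j) (B' j τ) τ)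
    (hderiv_cont : ∀ j, Continuous (B' j))
    (C : ℝ) (hC : ∀ j τ, ‖B j τ‖ ≤ C)
    (c : ℝ → ℝ) (hc_cont : Continuous c)
    (hc_int : MeasureTheory.IntegrableOn c (Set.Iic 0))
    (hcomm : ∀ j k, j ≠ k → ∀ τ : ℝ, ‖B j τ * B k τ - B k τ * B j τ‖ ≤ c τ)
    (hcomm' : ∀ j k, j ≠ k → ∀ τ : ℝ, ‖B' j τ * B k τ - B k τ * B' j τ‖ ≤ c τ)
    (Φ : H) (hΦ : ∀ j τ, B' j τ Φ = 0) :
    ∃ D : ℝ → H,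
      (∀ τ : ℝ, HasDerivAt (fun t => (List.ofFn fun j => B j t).prod Φ) (D τ) τ) ∧
      MeasureTheory.IntegrableOn (fun τ => ‖D τ‖) (Set.Iic 0) ∧
      ∃ L : H, Tendsto (fun τ => (List.ofFn fun j => B j τ).prod Φ) atBot (nhds L) := by
  set M : ℝ := max C 1 with hMdef
  have hM : (1:ℝ) ≤ M := le_max_right _ _
  obtain ⟨g, hg_cont, hg_deriv, hg_bound⟩ :=
    key_lemma Φ c M hM n B B' hderiv hderiv_cont
      (fun j τ => le_trans (hC j τ) (le_max_left _ _)) hcomm' hΦ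
  set K : ℝ := (n:ℝ)^2 * M^(2*n) * ‖Φ‖ with hKdef
  have hK0 : 0 ≤ K := by positivity
  set D : ℝ → H := fun τ => g τ Φ with hDdef
  set f : ℝ → H := fun t => (List.ofFn fun j => B j t).prod Φ with hfdef
  set ev : (H →L[ℂ] H) →L[ℝ] H :=
    ((ContinuousLinearMap.apply ℂ H) Φ).restrictScalars ℝ with hev
  have hev_apply : ∀ T : H →L[ℂ] H, ev T = T Φ := fun T => rfl
  have hD_deriv : ∀ τ, HasDerivAt f (D τ) τ := by
    intro τ
    have := ev.hasFDerivAt.comp_hasDerivAt τ (hg_deriv τ)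
    exact this
  have hD_cont : Continuous D := ev.continuous.comp hg_cont
  have hbound : ∀ τ, ‖D τ‖ ≤ K * |c τ| := fun τ => hg_bound τ
  have hdom : IntegrableOn (fun τ => K * |c τ|) (Set.Iic 0) := hc_int.abs.const_mul K
  have hD_int : IntegrableOn D (Set.Iic 0) :=
    hdom.mono' hD_cont.aestronglyMeasurable.restrict (ae_of_all _ hbound)
  have hDnorm_int : IntegrableOn (fun τ => ‖D τ‖) (Set.Iic 0) :=
    hdom.mono' hD_cont.norm.aestronglyMeasurable.restrict
      (ae_of_all _ fun τ => by simpa using hbound τ)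
  have hfund : ∀ t : ℝ, ∫ τ in t..0, D τ = f 0 - f t := fun t =>
    intervalIntegral.integral_eq_sub_of_hasDerivAt (fun x _ => hD_deriv x)
      (hD_cont.intervalIntegrable _ _)
  have hlim : Tendsto (fun t => ∫ τ in t..0, D τ) atBot (nhds (∫ τ in Set.Iic 0, D τ)) :=
    intervalIntegral_tendsto_integral_Iic 0 hD_int tendsto_id
  refine ⟨D, hD_deriv, hDnorm_int, f 0 - ∫ τ in Set.Iic 0, D τ, ?_⟩
  have h2 : Tendsto (fun t => f 0 - ∫ τ in t..0, D τ) atBot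
      (nhds (f 0 - ∫ τ in Set.Iic 0, D τ)) := tendsto_const_nhds.sub hlim
  exact h2.congr fun t => by rw [hfund t]; abel
end

section
/- Let E be a Hermitian matrix and suppose ρ(τ) = e^{−iτE} A₋ θ(−τ) + e^{−iτE} A₊ θ(τ) + σ(τ) with σ integrable. If f is a smooth function, then f(ε)·ρ̂(ε) has polar part (E − ε − i0)^{−1} f(E) C₋ + (E + ε − i0)^{−1} f(−E) C₊ plus a continuous remainder, where (E ∓ ε − i0)^{−1}C∓ are the polar parts of ρ̂(ε); i.e. multiplying by a smooth function replaces the residue matrices C± by f(±E)C±. -/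
private lemma continuous_dslope' (f : ℝ → ℂ) (hf : ContDiff ℝ (⊤ : ℕ∞) f) (a : ℝ) :
    Continuous (dslope f a) := by
  rw [continuous_iff_continuousAt]
  intro b
  by_cases hb : b = a
  · subst hb
    exact continuousAt_dslope_same.mpr (hf.differentiable (by simp)).differentiableAt
  · exact (continuousAt_dslope_of_ne hb).mpr hf.continuous.continuousAt

private lemma sum_mulVec' {n m : ℕ} (A : Fin m → Matrix (Fin n) (Fin n) ℂ)
    (v : Fin n → ℂ) : (∑ k, A k).mulVec v = ∑ k, (A k).mulVec v := by
  ext i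
  simp only [Matrix.mulVec, dotProduct, Finset.sum_apply, Finset.sum_mul,
    Matrix.sum_apply]
  rw [Finset.sum_comm]

private lemma proj_zero' {n m : ℕ} (P : Fin m → Matrix (Fin n) (Fin n) ℂ)
    (horth : ∀ j k, P j * P k = if j = k then P j else 0)
    (c : Fin m → ℂ) (hu : IsUnit (∑ k, c k • P k)) :
    ∀ k, c k = 0 → P k = 0 := by
  intro k hk
  have h1 : (∑ j, c j • P j) * P k = 0 := by
    rw [Finset.sum_mul]
    rw [Finset.sum_eq_zero]
    intro j _
    rw [smul_mul_assoc, horth]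
    by_cases hj : j = k
    · subst hj; simp [hk]
    · simp [hj]
  obtain ⟨u, hu'⟩ := hu
  calc P k = (↑u⁻¹ * ↑u) * P k := by rw [Units.inv_mul, one_mul]
    _ = ↑u⁻¹ * ((∑ j, c j • P j) * P k) := by rw [hu', mul_assoc]
    _ = 0 := by rw [h1, mul_zero]

private lemma proj_mul' {n m : ℕ} (P : Fin m → Matrix (Fin n) (Fin n) ℂ)
    (horth : ∀ j k, P j * P k = if j = k then P j else 0)
    (c d : Fin m → ℂ) :
    (∑ j, c j • P j) * (∑ k, d k • P k) = ∑ k, (c k * d k) • P k := by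
  rw [Finset.sum_mul_sum]
  rw [Finset.sum_comm]
  refine Finset.sum_congr rfl fun k _ => ?_
  rw [Finset.sum_eq_single k]
  · rw [smul_mul_assoc, mul_smul_comm, horth, if_pos rfl, smul_smul, mul_comm]
  · intro j _ hj
    rw [smul_mul_assoc, mul_smul_comm, horth, if_neg hj, smul_zero, smul_zero]
  · intro h; exact absurd (Finset.mem_univ k) h

private lemma proj_inv' {n m : ℕ} (P : Fin m → Matrix (Fin n) (Fin n) ℂ)
    (hsum : ∑ k, P k = 1)
    (horth : ∀ j k, P j * P k = if j = k then P j else 0)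
    (c : Fin m → ℂ) (hu : IsUnit (∑ k, c k • P k)) :
    (∑ k, c k • P k)⁻¹ = ∑ k, (c k)⁻¹ • P k := by
  apply Matrix.inv_eq_right_inv
  rw [proj_mul' P horth]
  rw [← hsum]
  refine Finset.sum_congr rfl fun k _ => ?_
  by_cases hk : c k = 0
  · rw [proj_zero' P horth c hu k hk]; simp
  · rw [mul_inv_cancel₀ hk, one_smul]

private lemma key_minus (f : ℝ → ℂ) (a ε : ℝ) (w : ℂ) (h : (a : ℂ) = (ε : ℂ) → w = 0) :
    f ε * (((a : ℂ) - ε)⁻¹ * w)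
      = f a * (((a : ℂ) - ε)⁻¹ * w) - dslope f a ε * w := by
  by_cases hae : (a : ℂ) = (ε : ℂ)
  · simp [h hae]
  · have hne : ε ≠ a := fun e => hae (by rw [e])
    rw [dslope_of_ne f hne, slope_def_module]
    rw [Complex.real_smul]
    push_cast
    rw [show ((ε : ℂ) - a)⁻¹ = -(((a : ℂ) - ε)⁻¹) by rw [← inv_neg, neg_sub]]
    ring

private lemma key_plus (f : ℝ → ℂ) (a ε : ℝ) (w : ℂ) (h : (a : ℂ) + (ε : ℂ) = 0 → w = 0) :
    f ε * (((a : ℂ) + ε)⁻¹ * w)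
      = f (-a) * (((a : ℂ) + ε)⁻¹ * w) + dslope f (-a) ε * w := by
  by_cases hae : (a : ℂ) + (ε : ℂ) = 0
  · simp [h hae]
  · have hne : ε ≠ -a := by
      intro e
      apply hae
      rw [e]; push_cast; ring
    rw [dslope_of_ne f hne, slope_def_module]
    rw [Complex.real_smul]
    push_cast
    ring

/-- Equation (11) of the paper: multiplication by a smooth function acts on the
polar part of `ρ̂` through the functional calculus of `E`.  Let `E` be a
Hermitian matrix with spectral decomposition `E = Σₖ εₖ Pₖ` and suppose
`ρ̂(ε) = (E − ε)⁻¹ C₋ + (E + ε)⁻¹ C₊ + σ(ε)` with `σ` continuous (the values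
of the boundary-value distributions `(E ∓ ε + i0)⁻¹ C∓` away from their poles
are given by the matrix resolvents).  If `f` is a smooth function then
`f(ε)·ρ̂(ε) = (E − ε)⁻¹ f(E) C₋ + (E + ε)⁻¹ f(−E) C₊ + σ'(ε)` with `σ'`
continuous: multiplying by `f` replaces the residue matrices `C±` by
`f(±E) C±`, where `f(±E) = Σₖ f(±εₖ) Pₖ`. -/
theorem smooth_multiplier_on_polar_part
    (n m : ℕ) (E : Matrix (Fin n) (Fin n) ℂ) (hE : E.IsHermitian)
    (eps : Fin m → ℝ) (P : Fin m → Matrix (Fin n) (Fin n) ℂ)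
    (hsum : ∑ k, P k = 1)
    (horth : ∀ j k, P j * P k = if j = k then P j else 0)
    (hspec : E = ∑ k, (eps k : ℂ) • P k)
    (ρhat : ℝ → (Fin n → ℂ)) (Cminus Cplus : Fin n → ℂ)
    (σ : ℝ → (Fin n → ℂ)) (hσ : Continuous σ)
    (hρ : ∀ ε : ℝ, IsUnit (E - (ε : ℂ) • 1) → IsUnit (E + (ε : ℂ) • 1) →
      ρhat ε = (E - (ε : ℂ) • 1)⁻¹.mulVec Cminus
             + (E + (ε : ℂ) • 1)⁻¹.mulVec Cplus + σ ε)
    (f : ℝ → ℂ) (hf : ContDiff ℝ (⊤ : ℕ∞) f) :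
    ∃ σ' : ℝ → (Fin n → ℂ), Continuous σ' ∧
      ∀ ε : ℝ, IsUnit (E - (ε : ℂ) • 1) → IsUnit (E + (ε : ℂ) • 1) →
        (fun i => f ε * ρhat ε i) =
          (E - (ε : ℂ) • 1)⁻¹.mulVec ((∑ k, f (eps k) • P k).mulVec Cminus)
          + (E + (ε : ℂ) • 1)⁻¹.mulVec ((∑ k, f (-eps k) • P k).mulVec Cplus)
          + σ' ε := by
  refine ⟨fun ε i => f ε * σ ε i
      - (∑ k, dslope f (eps k) ε * (P k).mulVec Cminus i)
      + (∑ k, dslope f (-eps k) ε * (P k).mulVec Cplus i), ?_, ?_⟩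
  · apply continuous_pi
    intro i
    refine ((hf.continuous.mul ((continuous_apply i).comp hσ)).sub ?_).add ?_
    · exact continuous_finset_sum _ fun k _ =>
        (continuous_dslope' f hf (eps k)).mul continuous_const
    · exact continuous_finset_sum _ fun k _ =>
        (continuous_dslope' f hf (-eps k)).mul continuous_const
  · intro ε h1 h2
    have hM1 : E - (ε : ℂ) • 1 = ∑ k, ((eps k : ℂ) - ε) • P k := by
      rw [hspec, ← hsum, Finset.smul_sum, ← Finset.sum_sub_distrib]
      exact Finset.sum_congr rfl fun k _ => (sub_smul _ _ _).symm
    have hM2 : E + (ε : ℂ) • 1 = ∑ k, ((eps k : ℂ) + ε) • P k := by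
      rw [hspec, ← hsum, Finset.smul_sum, ← Finset.sum_add_distrib]
      exact Finset.sum_congr rfl fun k _ => (add_smul _ _ _).symm
    have h1' : IsUnit (∑ k, ((eps k : ℂ) - ε) • P k) := hM1 ▸ h1
    have h2' : IsUnit (∑ k, ((eps k : ℂ) + ε) • P k) := hM2 ▸ h2
    have hz1 := proj_zero' P horth _ h1'
    have hz2 := proj_zero' P horth _ h2'
    have hinv1 : (E - (ε : ℂ) • 1)⁻¹ = ∑ k, ((eps k : ℂ) - ε)⁻¹ • P k := by
      rw [hM1, proj_inv' P hsum horth _ h1']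
    have hinv2 : (E + (ε : ℂ) • 1)⁻¹ = ∑ k, ((eps k : ℂ) + ε)⁻¹ • P k := by
      rw [hM2, proj_inv' P hsum horth _ h2']
    have entry : ∀ (c : Fin m → ℂ) (v : Fin n → ℂ) (i : Fin n),
        ((∑ k, c k • P k).mulVec v) i = ∑ k, c k * ((P k).mulVec v i) := by
      intro c v i
      rw [sum_mulVec', Finset.sum_apply]
      exact Finset.sum_congr rfl fun k _ => by
        rw [Matrix.smul_mulVec]; rfl
    funext i
    simp only [Pi.add_apply]
    rw [hρ ε h1 h2]
    simp only [Pi.add_apply]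
    have L1 : ((E - (ε : ℂ) • 1)⁻¹.mulVec Cminus) i
        = ∑ k, ((eps k : ℂ) - ε)⁻¹ * ((P k).mulVec Cminus i) := by
      rw [hinv1]; exact entry _ _ i
    have L2 : ((E + (ε : ℂ) • 1)⁻¹.mulVec Cplus) i
        = ∑ k, ((eps k : ℂ) + ε)⁻¹ * ((P k).mulVec Cplus i) := by
      rw [hinv2]; exact entry _ _ i
    have R1 : ((E - (ε : ℂ) • 1)⁻¹.mulVec ((∑ k, f (eps k) • P k).mulVec Cminus)) i
        = ∑ k, (((eps k : ℂ) - ε)⁻¹ * f (eps k)) * ((P k).mulVec Cminus i) := by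
      rw [hinv1, Matrix.mulVec_mulVec, proj_mul' P horth]; exact entry _ _ i
    have R2 : ((E + (ε : ℂ) • 1)⁻¹.mulVec ((∑ k, f (-eps k) • P k).mulVec Cplus)) i
        = ∑ k, (((eps k : ℂ) + ε)⁻¹ * f (-eps k)) * ((P k).mulVec Cplus i) := by
      rw [hinv2, Matrix.mulVec_mulVec, proj_mul' P horth]; exact entry _ _ i
    rw [L1, L2, R1, R2]
    have S1 : ∑ k, f ε * (((eps k : ℂ) - ε)⁻¹ * ((P k).mulVec Cminus i))
        = ∑ k, (f (eps k) * (((eps k : ℂ) - ε)⁻¹ * ((P k).mulVec Cminus i))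
            - dslope f (eps k) ε * ((P k).mulVec Cminus i)) :=
      Finset.sum_congr rfl fun k _ => key_minus f (eps k) ε _ (fun h => by
        rw [hz1 k (sub_eq_zero.mpr h), Matrix.zero_mulVec, Pi.zero_apply])
    have S2 : ∑ k, f ε * (((eps k : ℂ) + ε)⁻¹ * ((P k).mulVec Cplus i))
        = ∑ k, (f (-eps k) * (((eps k : ℂ) + ε)⁻¹ * ((P k).mulVec Cplus i))
            + dslope f (-eps k) ε * ((P k).mulVec Cplus i)) :=
      Finset.sum_congr rfl fun k _ => key_plus f (eps k) ε _ (fun h => by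
        rw [hz2 k h, Matrix.zero_mulVec, Pi.zero_apply])
    have E1 : ∑ k, f (eps k) * (((eps k : ℂ) - ε)⁻¹ * ((P k).mulVec Cminus i))
        = ∑ k, (((eps k : ℂ) - ε)⁻¹ * f (eps k)) * ((P k).mulVec Cminus i) :=
      Finset.sum_congr rfl fun k _ => by ring
    have E2 : ∑ k, f (-eps k) * (((eps k : ℂ) + ε)⁻¹ * ((P k).mulVec Cplus i))
        = ∑ k, (((eps k : ℂ) + ε)⁻¹ * f (-eps k)) * ((P k).mulVec Cplus i) :=
      Finset.sum_congr rfl fun k _ => by ring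
    rw [mul_add, mul_add, Finset.mul_sum, Finset.mul_sum, S1, S2,
      Finset.sum_sub_distrib, Finset.sum_add_distrib, E1, E2]
    ring
end

section
/- Suppose bounded operators L₁(τ),…,Lₙ(τ) acting on a normed space of linear functionals satisfy ‖[Lⱼ(τ), Lₖ(τ)]‖ → 0 as τ → −∞ for all j ≠ k, and suppose the limits lim_{τ→−∞} L_{σ(1)}(τ)⋯L_{σ(n)}(τ) ω exist for every permutation σ. Then all these limits coincide: the limit state is independent of the ordering of the factors. -/
open Filter

/-- If the (uniformly bounded) operators `L₁(τ),…,Lₙ(τ)` asymptotically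
commute as `τ → −∞` (`‖[Lⱼ(τ), Lₖ(τ)]‖ → 0` for `j ≠ k`) and all the limits
`lim_{τ→−∞} L_{σ(1)}(τ)⋯L_{σ(n)}(τ) ω` exist, then the limits coincide for
all permutations `σ`: the limit state is independent of the ordering of the
factors. -/
theorem asymptotically_commuting_limits_order_independent
    (H : Type*) [NormedAddCommGroup H] [NormedSpace ℂ H]
    (n : ℕ) (L : Fin n → ℝ → (H →L[ℂ] H)) (ω : H)
    (C : ℝ) (hC : ∀ (j : Fin n) (τ : ℝ), τ ≤ 0 → ‖L j τ‖ ≤ C)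
    (hcomm : ∀ j k : Fin n, j ≠ k →
      Tendsto (fun τ : ℝ => ‖L j τ * L k τ - L k τ * L j τ‖) atBot (nhds 0))
    (hlim : ∀ σ : Equiv.Perm (Fin n), ∃ Q : H,
      Tendsto (fun τ : ℝ => (List.ofFn fun i => L (σ i) τ).prod ω) atBot (nhds Q)) :
    ∀ (σ σ' : Equiv.Perm (Fin n)) (Q Q' : H),
      Tendsto (fun τ : ℝ => (List.ofFn fun i => L (σ i) τ).prod ω) atBot (nhds Q) →
      Tendsto (fun τ : ℝ => (List.ofFn fun i => L (σ' i) τ).prod ω) atBot (nhds Q') →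
      Q = Q' := by
  intro σ σ' Q Q' hQ hQ'
  set D : ℝ := max C 1 with hD
  have hD1 : (1 : ℝ) ≤ D := le_max_right _ _
  have hD0 : (0 : ℝ) ≤ D := zero_le_one.trans hD1
  -- uniform bound on products for τ ≤ 0
  have hbound : ∀ (l : List (Fin n)) (τ : ℝ), τ ≤ 0 →
      ‖(l.map fun j => L j τ).prod‖ ≤ D ^ l.length := by
    intro l
    induction l with
    | nil =>
      intro τ hτ
      simp only [List.map_nil, List.prod_nil, List.length_nil, pow_zero]
      have h1 : ‖(1 : H →L[ℂ] H)‖ ≤ 1 := ContinuousLinearMap.norm_id_le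
      exact h1
    | cons a l ih =>
      intro τ hτ
      calc ‖(((a :: l).map fun j => L j τ)).prod‖
          = ‖L a τ * (l.map fun j => L j τ).prod‖ := by simp
        _ ≤ ‖L a τ‖ * ‖(l.map fun j => L j τ).prod‖ := norm_mul_le _ _
        _ ≤ D * D ^ l.length := by
            apply mul_le_mul ((hC a τ hτ).trans (le_max_left _ _)) (ih τ hτ)
              (norm_nonneg _) hD0
        _ = D ^ (a :: l).length := by rw [List.length_cons, pow_succ']
  -- key: products along permuted (nodup) lists have difference tending to 0
  have key : ∀ {l₁ l₂ : List (Fin n)}, l₁.Perm l₂ → l₁.Nodup →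
      Tendsto (fun τ : ℝ =>
        ‖(l₁.map fun j => L j τ).prod - (l₂.map fun j => L j τ).prod‖) atBot (nhds 0) := by
    intro l₁ l₂ hp
    induction hp with
    | nil => intro _; simp only [List.map_nil, sub_self, norm_zero]; exact tendsto_const_nhds
    | cons a h ih =>
      rename_i l₁ l₂
      intro hnd
      have ih' := ih (List.Nodup.of_cons hnd)
      apply squeeze_zero' (Eventually.of_forall fun τ => norm_nonneg _)
        (g := fun τ => D * ‖(l₁.map fun j => L j τ).prod - (l₂.map fun j => L j τ).prod‖)
      · filter_upwards [eventually_le_atBot (0 : ℝ)] with τ hτ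
        have : ((a :: l₁).map fun j => L j τ).prod - ((a :: l₂).map fun j => L j τ).prod
            = L a τ * ((l₁.map fun j => L j τ).prod - (l₂.map fun j => L j τ).prod) := by
          simp [mul_sub]
        rw [this]
        exact (norm_mul_le _ _).trans
          (mul_le_mul_of_nonneg_right ((hC a τ hτ).trans (le_max_left _ _)) (norm_nonneg _))
      · simpa using ih'.const_mul D
    | swap x y l =>
      intro hnd
      have hxy : y ≠ x := by
        simp [List.nodup_cons] at hnd
        exact hnd.1.1
      apply squeeze_zero' (Eventually.of_forall fun τ => norm_nonneg _)
        (g := fun τ => ‖L y τ * L x τ - L x τ * L y τ‖ * D ^ l.length)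
      · filter_upwards [eventually_le_atBot (0 : ℝ)] with τ hτ
        have : ((y :: x :: l).map fun j => L j τ).prod - ((x :: y :: l).map fun j => L j τ).prod
            = (L y τ * L x τ - L x τ * L y τ) * (l.map fun j => L j τ).prod := by
          simp [mul_assoc, sub_mul]
        rw [this]
        exact (norm_mul_le _ _).trans
          (mul_le_mul_of_nonneg_left (hbound l τ hτ) (norm_nonneg _))
      · simpa using (hcomm y x hxy).mul_const (D ^ l.length)
    | trans h₁ h₂ ih₁ ih₂ =>
      rename_i l₁ l₂ l₃ 
      intro hnd
      have ih₁' := ih₁ hnd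
      have ih₂' := ih₂ (h₁.nodup_iff.mp hnd)
      apply squeeze_zero' (Eventually.of_forall fun τ => norm_nonneg _)
        (g := fun τ => ‖(l₁.map fun j => L j τ).prod - (l₂.map fun j => L j τ).prod‖
          + ‖(l₂.map fun j => L j τ).prod - (l₃.map fun j => L j τ).prod‖)
      · exact Eventually.of_forall fun τ => by
          simpa using norm_sub_le_norm_sub_add_norm_sub
            ((l₁.map fun j => L j τ).prod) ((l₂.map fun j => L j τ).prod)
            ((l₃.map fun j => L j τ).prod)
      · simpa using ih₁'.add ih₂'
  -- apply to the two permutations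
  have hperm : (List.ofFn (σ : Fin n → Fin n)).Perm (List.ofFn (σ' : Fin n → Fin n)) := by
    have h1 := Equiv.Perm.ofFn_comp_perm σ (id : Fin n → Fin n)
    have h2 := Equiv.Perm.ofFn_comp_perm σ' (id : Fin n → Fin n)
    simpa using h1.trans h2.symm
  have hnd : (List.ofFn (σ : Fin n → Fin n)).Nodup :=
    List.nodup_ofFn.mpr σ.injective
  have hkey := key hperm hnd
  -- rewrite products
  have hrw : ∀ (ρ : Equiv.Perm (Fin n)) (τ : ℝ),
      (List.ofFn fun i => L (ρ i) τ).prod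
        = ((List.ofFn (ρ : Fin n → Fin n)).map fun j => L j τ).prod := by
    intro ρ τ
    rw [List.map_ofFn]
    rfl
  -- the applied difference tends to 0
  have hdiff : Tendsto (fun τ : ℝ =>
      (List.ofFn fun i => L (σ i) τ).prod ω - (List.ofFn fun i => L (σ' i) τ).prod ω)
      atBot (nhds 0) := by
    rw [tendsto_zero_iff_norm_tendsto_zero]
    apply squeeze_zero' (Eventually.of_forall fun τ => norm_nonneg _)
      (g := fun τ => ‖((List.ofFn (σ : Fin n → Fin n)).map fun j => L j τ).prod
        - ((List.ofFn (σ' : Fin n → Fin n)).map fun j => L j τ).prod‖ * ‖ω‖)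
    · apply Eventually.of_forall
      intro τ
      rw [hrw σ τ, hrw σ' τ]
      calc ‖(((List.ofFn (σ : Fin n → Fin n)).map fun j => L j τ).prod) ω
            - (((List.ofFn (σ' : Fin n → Fin n)).map fun j => L j τ).prod) ω‖
          = ‖(((List.ofFn (σ : Fin n → Fin n)).map fun j => L j τ).prod
            - ((List.ofFn (σ' : Fin n → Fin n)).map fun j => L j τ).prod) ω‖ := by
            rw [ContinuousLinearMap.sub_apply]
        _ ≤ _ := ContinuousLinearMap.le_opNorm _ _
    · simpa using hkey.mul_const ‖ω‖
  have := hQ.sub hQ'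
  have h0 : Q - Q' = 0 := tendsto_nhds_unique this hdiff
  exact sub_eq_zero.mp h0
end
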